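/- Let K be a field and J = (xy, xz, yz) ⊆ K[x,y,z]. Then Ass(J^k) = {(x,y), (x,z), (y,z), (x,y,z)} for every integer k ≥ 2. In particular astab(J) = 2. -/

import Mathlib

open MvPolynomial

/-- An ideal of a polynomial ring is *graded* (homogeneous) if it is generated by
homogeneous polynomials. -/
def IsGradedIdeal {n : ℕ} {K : Type*} [Field K]
    (I : Ideal (MvPolynomial (Fin n) K)) : Prop :=
  ∃ G : Set (MvPolynomial (Fin n) K),
    (∀ g ∈ G, ∃ d, g.IsHomogeneous d) ∧ I = Ideal.span G

/-- `vp I p` is the `v_p`-number of `I`: the least degree of a homogeneous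
polynomial `f` with `I : f = p`. -/
noncomputable def vp {n : ℕ} {K : Type*} [Field K]
    (I p : Ideal (MvPolynomial (Fin n) K)) : ℕ :=
  sInf {d | ∃ f : MvPolynomial (Fin n) K, f.IsHomogeneous d ∧
    Submodule.colon I (Ideal.span {f}) = p}

/-- `vnum I` is the `v`-number of `I`: the minimum of `vp I p` over the
associated primes `p` of `S/I`. -/
noncomputable def vnum {n : ℕ} {K : Type*} [Field K]
    (I : Ideal (MvPolynomial (Fin n) K)) : ℕ :=
  sInf {d | ∃ p ∈ associatedPrimes (MvPolynomial (Fin n) K) (MvPolynomial (Fin n) K ⧸ I),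
    ∃ f : MvPolynomial (Fin n) K, f.IsHomogeneous d ∧
      Submodule.colon I (Ideal.span {f}) = p}

/-- `astab I` is the index of ass-stability of `I`: the least `k₀ ≥ 1` such that
`Ass(I^k) = Ass(I^{k₀})` for all `k ≥ k₀`. -/
noncomputable def astab {n : ℕ} {K : Type*} [Field K]
    (I : Ideal (MvPolynomial (Fin n) K)) : ℕ :=
  sInf {k₀ | 1 ≤ k₀ ∧ ∀ k, k₀ ≤ k →
    associatedPrimes (MvPolynomial (Fin n) K) (MvPolynomial (Fin n) K ⧸ I ^ k)
      = associatedPrimes (MvPolynomial (Fin n) K) (MvPolynomial (Fin n) K ⧸ I ^ k₀)}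

/-- `alphaDeg I` is the initial degree `α(I) = min {d : I_d ≠ 0}` of `I`. -/
noncomputable def alphaDeg {n : ℕ} {K : Type*} [Field K]
    (I : Ideal (MvPolynomial (Fin n) K)) : ℕ :=
  sInf {d | ∃ f ∈ I, f ≠ 0 ∧ f.IsHomogeneous d}

/-- `vstab I` is the index of v-stability of `I`: the least `k₀ ≥ 1` such that
`v(I^k) = α(I)·k + c` for all `k ≥ k₀`, where `c` is the constant such that this
holds for all `k ≫ 0`. -/
noncomputable def vstab {n : ℕ} {K : Type*} [Field K]
    (I : Ideal (MvPolynomial (Fin n) K)) : ℕ :=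
  sInf {k₀ | 1 ≤ k₀ ∧ ∃ c : ℤ, ∀ k, k₀ ≤ k →
    (vnum (I ^ k) : ℤ) = (alphaDeg I : ℤ) * k + c}

/-- `assInf I` is the stable set of associated primes `Ass^∞(I)` of the powers of `I`. -/
def assInf {n : ℕ} {K : Type*} [Field K]
    (I : Ideal (MvPolynomial (Fin n) K)) : Set (Ideal (MvPolynomial (Fin n) K)) :=
  {p | ∃ k₀, ∀ k, k₀ ≤ k →
    p ∈ associatedPrimes (MvPolynomial (Fin n) K) (MvPolynomial (Fin n) K ⧸ I ^ k)}

/-- `astabP I p` is the least `k₀` such that `p ∈ Ass(I^k)` for all `k ≥ k₀`. -/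
noncomputable def astabP {n : ℕ} {K : Type*} [Field K]
    (I p : Ideal (MvPolynomial (Fin n) K)) : ℕ :=
  sInf {k₀ | ∀ k, k₀ ≤ k →
    p ∈ associatedPrimes (MvPolynomial (Fin n) K) (MvPolynomial (Fin n) K ⧸ I ^ k)}

/-- `vstabP I p` is the least `k₀` such that `p ∈ Ass(I^k)` and `v_p(I^k)` agrees
with its eventual linear function `a_p·k + b_p` for all `k ≥ k₀`. -/
noncomputable def vstabP {n : ℕ} {K : Type*} [Field K]
    (I p : Ideal (MvPolynomial (Fin n) K)) : ℕ :=
  sInf {k₀ | ∃ a b : ℤ, ∀ k, k₀ ≤ k →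
    p ∈ associatedPrimes (MvPolynomial (Fin n) K) (MvPolynomial (Fin n) K ⧸ I ^ k) ∧
    (vp (I ^ k) p : ℤ) = a * k + b}

namespace EdgeTri

open Pointwise

variable {K : Type*} [Field K]

abbrev S (K : Type*) [Field K] := MvPolynomial (Fin 3) K

/-- weight of an exponent vector -/
def wt (c : Fin 3 → ℕ) (d : Fin 3 →₀ ℕ) : ℕ := c 0 * d 0 + c 1 * d 1 + c 2 * d 2

lemma wt_add (c : Fin 3 → ℕ) (d e : Fin 3 →₀ ℕ) : wt c (d + e) = wt c d + wt c e := by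
  simp [wt, Finsupp.add_apply]; ring

lemma wt_mono {c : Fin 3 → ℕ} {d e : Fin 3 →₀ ℕ} (h : d ≤ e) : wt c d ≤ wt c e := by
  have h0 := h 0; have h1 := h 1; have h2 := h 2
  simp only [wt]
  have := Nat.mul_le_mul_left (c 0) h0
  have := Nat.mul_le_mul_left (c 1) h1
  have := Nat.mul_le_mul_left (c 2) h2
  omega

/-- the monomial ideal of all monomials of `c`-weight at least `t` -/
noncomputable def mId (K : Type*) [Field K] (c : Fin 3 → ℕ) (t : ℕ) : Ideal (S K) :=
  Ideal.span ((fun d => monomial d (1 : K)) '' {d | t ≤ wt c d})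

lemma mem_mId {c : Fin 3 → ℕ} {t : ℕ} {f : S K} :
    f ∈ mId K c t ↔ ∀ u ∈ f.support, t ≤ wt c u := by
  rw [mId, mem_ideal_span_monomial_image]
  constructor
  · rintro h u hu
    obtain ⟨d, hd, hdu⟩ := h u hu
    exact le_trans hd (wt_mono hdu)
  · intro h u hu
    exact ⟨u, h u hu, le_refl u⟩

lemma digits_inj {B a b c a' b' c' : ℕ} (ha : a < B) (hb : b < B) (hc : c < B)
    (ha' : a' < B) (hb' : b' < B) (hc' : c' < B)
    (h : (a * B + b) * B + c = (a' * B + b') * B + c') : a = a' ∧ b = b' ∧ c = c' := by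
  have hB : 0 < B := by omega
  have hcc : c = c' := by
    have h1 : ((a * B + b) * B + c) % B = c % B := by
      rw [mul_comm (a * B + b) B]; exact Nat.mul_add_mod _ _ _
    have h2 : ((a' * B + b') * B + c') % B = c' % B := by
      rw [mul_comm (a' * B + b') B]; exact Nat.mul_add_mod _ _ _
    rw [h, h2] at h1
    rw [Nat.mod_eq_of_lt hc', Nat.mod_eq_of_lt hc] at h1
    omega
  have h2 : (a * B + b) * B = (a' * B + b') * B := by omega
  have h3 : a * B + b = a' * B + b' := Nat.eq_of_mul_eq_mul_right hB h2
  have hbb : b = b' := by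
    have h1 : (a * B + b) % B = b % B := by
      rw [mul_comm a B]; exact Nat.mul_add_mod _ _ _
    have h2 : (a' * B + b') % B = b' % B := by
      rw [mul_comm a' B]; exact Nat.mul_add_mod _ _ _
    rw [h3, h2] at h1
    rw [Nat.mod_eq_of_lt hb', Nat.mod_eq_of_lt hb] at h1
    omega
  have haa : a = a' := by
    have h4 : a * B = a' * B := by omega
    exact Nat.eq_of_mul_eq_mul_right hB h4
  exact ⟨haa, hbb, hcc⟩

lemma entry_lt {f : S K} {d : Fin 3 →₀ ℕ} (hd : d ∈ f.support) (i : Fin 3) :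
    d i ≤ f.totalDegree := by
  refine le_trans ?_ (MvPolynomial.le_totalDegree hd)
  by_cases hi : i ∈ d.support
  · exact Finset.single_le_sum (fun _ _ => Nat.zero_le _) hi
  · simp [Finsupp.notMem_support_iff.mp hi]

/-- key multiplication lemma: the product of two nonzero polynomials has a monomial
whose weight is the sum of the minimal weights. -/
lemma exists_min_mul (c : Fin 3 → ℕ) {f g : S K} (hf : f ≠ 0) (hg : g ≠ 0) :
    ∃ u ∈ (f * g).support, ∃ d ∈ f.support, ∃ e ∈ g.support,
      wt c u = wt c d + wt c e ∧ (∀ d' ∈ f.support, wt c d ≤ wt c d') ∧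
        (∀ e' ∈ g.support, wt c e ≤ wt c e') := by
  classical
  set B : ℕ := f.totalDegree + g.totalDegree + 1 with hB
  set key : (Fin 3 →₀ ℕ) → ℕ := fun d => (d 0 * B + d 1) * B + d 2 with hkey
  -- minimal weight then minimal key in f.support
  obtain ⟨d1, hd1, hd1min⟩ := f.support.exists_min_image (wt c)
    (MvPolynomial.support_nonempty.mpr hf)
  obtain ⟨d0, hd0mem, hd0min⟩ := (f.support.filter (fun d => wt c d = wt c d1)).exists_min_image
    key ⟨d1, by simp [hd1]⟩
  rw [Finset.mem_filter] at hd0mem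
  obtain ⟨hd0, hd0w⟩ := hd0mem
  obtain ⟨e1, he1, he1min⟩ := g.support.exists_min_image (wt c)
    (MvPolynomial.support_nonempty.mpr hg)
  obtain ⟨e0, he0mem, he0min⟩ := (g.support.filter (fun d => wt c d = wt c e1)).exists_min_image
    key ⟨e1, by simp [he1]⟩
  rw [Finset.mem_filter] at he0mem
  obtain ⟨he0, he0w⟩ := he0mem
  -- uniqueness of the minimal pair
  have huniq : ∀ d e : Fin 3 →₀ ℕ, d ∈ f.support → e ∈ g.support → d + e = d0 + e0 →
      d = d0 ∧ e = e0 := by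
    intro d e hd he hsum
    have hwsum : wt c d + wt c e = wt c d0 + wt c e0 := by
      rw [← wt_add, ← wt_add, hsum]
    have hwd : wt c d = wt c d0 := by
      have := hd1min d hd; have := he1min e he; omega
    have hwe : wt c e = wt c e0 := by
      have := hd1min d hd; have := he1min e he; omega
    have hkd : key d ≥ key d0 := hd0min d (by simp [hd, hwd, hd0w])
    have hke : key e ≥ key e0 := he0min e (by simp [he, hwe, he0w])
    have hksum : key d + key e = key d0 + key e0 := by
      have : key (d + e) = key (d0 + e0) := by rw [hsum]
      simp only [hkey, Finsupp.add_apply] at this ⊢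
      ring_nf at this ⊢
      omega
    have hkd' : key d = key d0 := by omega
    have hke' : key e = key e0 := by omega
    have hltf : ∀ x ∈ f.support, ∀ i, x i < B := by
      intro x hx i; have := entry_lt hx i; omega
    have hltg : ∀ x ∈ g.support, ∀ i, x i < B := by
      intro x hx i; have := entry_lt hx i; omega
    have hdd : d = d0 := by
      have hinj := digits_inj (hltf d hd 0) (hltf d hd 1) (hltf d hd 2)
        (hltf d0 hd0 0) (hltf d0 hd0 1) (hltf d0 hd0 2) hkd'
      ext i
      fin_cases i
      · exact hinj.1
      · exact hinj.2.1
      · exact hinj.2.2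
    refine ⟨hdd, ?_⟩
    rw [hdd] at hsum
    exact add_left_cancel hsum
  -- the product coefficient at `d0 + e0` is a single product of coefficients
  have hcoeff : MvPolynomial.coeff (d0 + e0) (f * g)
      = MvPolynomial.coeff d0 f * MvPolynomial.coeff e0 g := by
    rw [MvPolynomial.coeff_mul]
    refine Finset.sum_eq_single_of_mem (d0, e0) (Finset.HasAntidiagonal.mem_antidiagonal.mpr rfl) ?_
    rintro ⟨d, e⟩ hde hne
    rw [Finset.HasAntidiagonal.mem_antidiagonal] at hde
    by_contra hcontr
    have hdmem : d ∈ f.support := by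
      rw [MvPolynomial.mem_support_iff]; intro h0; exact hcontr (by simp [h0])
    have hemem : e ∈ g.support := by
      rw [MvPolynomial.mem_support_iff]; intro h0; exact hcontr (by simp [h0])
    obtain ⟨h1, h2⟩ := huniq d e hdmem hemem hde
    exact hne (by rw [h1, h2])
  have hne0 : MvPolynomial.coeff (d0 + e0) (f * g) ≠ 0 := by
    rw [hcoeff]
    exact mul_ne_zero (MvPolynomial.mem_support_iff.mp hd0)
      (MvPolynomial.mem_support_iff.mp he0)
  refine ⟨d0 + e0, MvPolynomial.mem_support_iff.mpr hne0, d0, hd0, e0, he0, wt_add c d0 e0, ?_, ?_⟩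
  · intro d' hd'; rw [hd0w]; exact hd1min d' hd'
  · intro e' he'; rw [he0w]; exact he1min e' he'


lemma not_mem_mId_iff {c : Fin 3 → ℕ} {t : ℕ} {f : S K} :
    f ∉ mId K c t ↔ ∃ u ∈ f.support, wt c u < t := by
  rw [mem_mId]; push_neg; rfl

lemma colon_lemma {c : Fin 3 → ℕ} {t : ℕ} {f g : S K} (hf : f ∉ mId K c t)
    (hfg : g * f ∈ mId K c t) : g ∈ mId K c 1 := by
  by_contra hg
  have hf0 : f ≠ 0 := fun h => hf (h ▸ (mId K c t).zero_mem)
  have hg0 : g ≠ 0 := fun h => hg (h ▸ (mId K c 1).zero_mem)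
  obtain ⟨u, hu, d, hd, e, he, hsum, hdmin, hemin⟩ := exists_min_mul c hg0 hf0
  obtain ⟨e', he', hwe'⟩ := not_mem_mId_iff.mp hf
  obtain ⟨d', hd', hwd'⟩ := not_mem_mId_iff.mp hg
  have h1 := hdmin d' hd'
  have h2 := hemin e' he'
  have h3 := mem_mId.mp hfg u hu
  omega

lemma mId_isPrime (c : Fin 3 → ℕ) : (mId K c 1).IsPrime := by
  rw [Ideal.isPrime_iff]
  constructor
  · intro htop
    have h1 : (1 : S K) ∈ mId K c 1 := htop ▸ Submodule.mem_top
    have h0 : (0 : Fin 3 →₀ ℕ) ∈ (1 : S K).support := by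
      rw [MvPolynomial.mem_support_iff]; simp
    have := mem_mId.mp h1 0 h0
    simp [wt] at this
  · intro a b hab
    by_cases ha : a ∈ mId K c 1
    · exact Or.inl ha
    · exact Or.inr (colon_lemma ha (by rwa [mul_comm]))

/-- exponent vector (a, b, c) -/
noncomputable def tri (a b c : ℕ) : Fin 3 →₀ ℕ :=
  Finsupp.single 0 a + Finsupp.single 1 b + Finsupp.single 2 c

@[simp] lemma tri_apply0 (a b c : ℕ) : tri a b c 0 = a := by
  simp [tri, Finsupp.single_apply]
@[simp] lemma tri_apply1 (a b c : ℕ) : tri a b c 1 = b := by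
  simp [tri, Finsupp.single_apply]
@[simp] lemma tri_apply2 (a b c : ℕ) : tri a b c 2 = c := by
  simp [tri, Finsupp.single_apply]

lemma wt_tri (w : Fin 3 → ℕ) (a b c : ℕ) :
    wt w (tri a b c) = w 0 * a + w 1 * b + w 2 * c := by
  simp [wt]

lemma tri_le_iff {a b c : ℕ} {u : Fin 3 →₀ ℕ} :
    tri a b c ≤ u ↔ a ≤ u 0 ∧ b ≤ u 1 ∧ c ≤ u 2 := by
  rw [Finsupp.le_def]
  constructor
  · intro h
    refine ⟨?_, ?_, ?_⟩
    · simpa using h 0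
    · simpa using h 1
    · simpa using h 2
  · rintro ⟨h0, h1, h2⟩ i
    fin_cases i <;> simpa

lemma tri_add (a b c a' b' c' : ℕ) :
    tri a b c + tri a' b' c' = tri (a + a') (b + b') (c + c') := by
  ext i
  fin_cases i <;> simp [Finsupp.add_apply]

lemma eq_tri_self (u : Fin 3 →₀ ℕ) : u = tri (u 0) (u 1) (u 2) := by
  ext i; fin_cases i <;> simp

/-- exponents of the `k`-th power of the triangle edge ideal -/
def TT (k : ℕ) : Set (Fin 3 →₀ ℕ) :=
  {d | ∃ a b c : ℕ, a + b + c = k ∧ d = tri (a + b) (a + c) (b + c)}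

lemma TT_add (k l : ℕ) : TT k + TT l = TT (k + l) := by
  ext u
  constructor
  · rintro ⟨d, ⟨a, b, c, habc, rfl⟩, e, ⟨a', b', c', habc', rfl⟩, rfl⟩
    exact ⟨a + a', b + b', c + c', by omega, by simp only [tri_add]; congr 1 <;> omega⟩
  · rintro ⟨a, b, c, habc, rfl⟩
    -- split a = a1+a2 etc. with a1+b1+c1 = k
    refine ⟨tri (min a k + min b (k - min a k)) (min a k + (k - min a k - min b (k - min a k)))
        (min b (k - min a k) + (k - min a k - min b (k - min a k))), ?_, ?_⟩
    · exact ⟨min a k, min b (k - min a k), k - min a k - min b (k - min a k), by omega, rfl⟩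
    refine ⟨tri ((a - min a k) + (b - min b (k - min a k)))
        ((a - min a k) + (c - (k - min a k - min b (k - min a k))))
        ((b - min b (k - min a k)) + (c - (k - min a k - min b (k - min a k)))), ?_, ?_⟩
    · exact ⟨a - min a k, b - min b (k - min a k), c - (k - min a k - min b (k - min a k)),
        by omega, rfl⟩
    · simp only [tri_add]; congr 1 <;> omega

lemma image_mul_image_monomial (A B : Set (Fin 3 →₀ ℕ)) :
    ((fun d => monomial d (1 : K)) '' A) * ((fun d => monomial d (1 : K)) '' B)
      = (fun d => monomial d (1 : K)) '' (A + B) := by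
  ext x
  rw [Set.mem_mul]
  constructor
  · rintro ⟨-, ⟨d, hd, rfl⟩, -, ⟨e, he, rfl⟩, rfl⟩
    exact ⟨d + e, ⟨d, hd, e, he, rfl⟩, by rw [MvPolynomial.monomial_mul, one_mul]⟩
  · rintro ⟨-, ⟨d, hd, e, he, rfl⟩, rfl⟩
    exact ⟨monomial d 1, ⟨d, hd, rfl⟩, monomial e 1, ⟨e, he, rfl⟩,
      by rw [MvPolynomial.monomial_mul, one_mul]⟩

lemma X_mul_X (i j : Fin 3) :
    (X i * X j : S K) = monomial (Finsupp.single i 1 + Finsupp.single j 1) 1 := by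
  rw [MvPolynomial.X, MvPolynomial.X, MvPolynomial.monomial_mul, one_mul]

lemma spanJ_eq :
    (Ideal.span {X 0 * X 1, X 0 * X 2, X 1 * X 2} : Ideal (S K))
      = Ideal.span ((fun d => monomial d (1 : K)) '' TT 1) := by
  congr 1
  have hTT : TT 1 = {tri 1 1 0, tri 1 0 1, tri 0 1 1} := by
    ext u
    constructor
    · rintro ⟨a, b, c, habc, rfl⟩
      have : (a = 1 ∧ b = 0 ∧ c = 0) ∨ (a = 0 ∧ b = 1 ∧ c = 0) ∨
          (a = 0 ∧ b = 0 ∧ c = 1) := by omega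
      rcases this with ⟨rfl, rfl, rfl⟩ | ⟨rfl, rfl, rfl⟩ | ⟨rfl, rfl, rfl⟩
      · left; rfl
      · right; left; rfl
      · right; right; rfl
    · rintro (rfl | rfl | rfl)
      · exact ⟨1, 0, 0, rfl, rfl⟩
      · exact ⟨0, 1, 0, rfl, rfl⟩
      · exact ⟨0, 0, 1, rfl, rfl⟩
  rw [hTT, Set.image_insert_eq, Set.image_insert_eq, Set.image_singleton]
  have e1 : (X 0 * X 1 : S K) = monomial (tri 1 1 0) 1 := by
    rw [X_mul_X]; congr 1; simp [tri]
  have e2 : (X 0 * X 2 : S K) = monomial (tri 1 0 1) 1 := by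
    rw [X_mul_X]; congr 1; simp [tri]
  have e3 : (X 1 * X 2 : S K) = monomial (tri 0 1 1) 1 := by
    rw [X_mul_X]; congr 1; simp [tri]
  rw [e1, e2, e3]

lemma Jpow_eq {k : ℕ} (hk : 1 ≤ k) :
    (Ideal.span {X 0 * X 1, X 0 * X 2, X 1 * X 2} : Ideal (S K)) ^ k
      = Ideal.span ((fun d => monomial d (1 : K)) '' TT k) := by
  induction k, hk using Nat.le_induction with
  | base => rw [pow_one, spanJ_eq]
  | succ k hk ih =>
    rw [pow_succ, ih, spanJ_eq, Ideal.span_mul_span', image_mul_image_monomial, TT_add]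

lemma mem_Jpow {k : ℕ} (hk : 1 ≤ k) {f : S K} :
    f ∈ (Ideal.span {X 0 * X 1, X 0 * X 2, X 1 * X 2} : Ideal (S K)) ^ k ↔
      ∀ u ∈ f.support, ∃ a b c : ℕ, a + b + c = k ∧
        a + b ≤ u 0 ∧ a + c ≤ u 1 ∧ b + c ≤ u 2 := by
  rw [Jpow_eq hk, mem_ideal_span_monomial_image]
  refine forall₂_congr fun u hu => ?_
  constructor
  · rintro ⟨-, ⟨a, b, c, habc, rfl⟩, hle⟩
    rw [tri_le_iff] at hle
    exact ⟨a, b, c, habc, by simpa using hle.1, by simpa using hle.2.1, by simpa using hle.2.2⟩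
  · rintro ⟨a, b, c, habc, h0, h1, h2⟩
    exact ⟨tri (a + b) (a + c) (b + c), ⟨a, b, c, habc, rfl⟩,
      tri_le_iff.mpr ⟨by simpa, by simpa, by simpa⟩⟩

@[simp] lemma wt01 (u : Fin 3 →₀ ℕ) : wt ![1,1,0] u = u 0 + u 1 := by simp [wt]
@[simp] lemma wt02 (u : Fin 3 →₀ ℕ) : wt ![1,0,1] u = u 0 + u 2 := by simp [wt]
@[simp] lemma wt12 (u : Fin 3 →₀ ℕ) : wt ![0,1,1] u = u 1 + u 2 := by simp [wt]
@[simp] lemma wtAll (u : Fin 3 →₀ ℕ) : wt ![1,1,1] u = u 0 + u 1 + u 2 := by simp [wt]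

lemma wt_single (c : Fin 3 → ℕ) (s : Fin 3) (n : ℕ) :
    wt c (Finsupp.single s n) = c s * n := by
  fin_cases s <;> simp [wt, Finsupp.single_apply]

/-- the abstract edge ideal -/
noncomputable abbrev JJ (K : Type*) [Field K] : Ideal (S K) :=
  Ideal.span {X 0 * X 1, X 0 * X 2, X 1 * X 2}

lemma Jpow_le_mId01 {k : ℕ} (hk : 1 ≤ k) : (JJ K) ^ k ≤ mId K ![1,1,0] k := by
  intro f hf
  rw [mem_mId]
  intro u hu
  obtain ⟨a, b, c, habc, h0, h1, h2⟩ := (mem_Jpow hk).mp hf u hu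
  rw [wt01]; omega

lemma Jpow_le_mId02 {k : ℕ} (hk : 1 ≤ k) : (JJ K) ^ k ≤ mId K ![1,0,1] k := by
  intro f hf
  rw [mem_mId]
  intro u hu
  obtain ⟨a, b, c, habc, h0, h1, h2⟩ := (mem_Jpow hk).mp hf u hu
  rw [wt02]; omega

lemma Jpow_le_mId12 {k : ℕ} (hk : 1 ≤ k) : (JJ K) ^ k ≤ mId K ![0,1,1] k := by
  intro f hf
  rw [mem_mId]
  intro u hu
  obtain ⟨a, b, c, habc, h0, h1, h2⟩ := (mem_Jpow hk).mp hf u hu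
  rw [wt12]; omega

lemma Jpow_le_mIdAll {k : ℕ} (hk : 1 ≤ k) : (JJ K) ^ k ≤ mId K ![1,1,1] (2 * k) := by
  intro f hf
  rw [mem_mId]
  intro u hu
  obtain ⟨a, b, c, habc, h0, h1, h2⟩ := (mem_Jpow hk).mp hf u hu
  rw [wtAll]; omega

/-- converse inclusion : intersection of the four monomial ideals is `J^k` -/
lemma mem_Jpow_of_mem_mIds {k : ℕ} (hk : 1 ≤ k) {f : S K}
    (h01 : f ∈ mId K ![1,1,0] k) (h02 : f ∈ mId K ![1,0,1] k)
    (h12 : f ∈ mId K ![0,1,1] k) (hAll : f ∈ mId K ![1,1,1] (2 * k)) :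
    f ∈ (JJ K) ^ k := by
  rw [mem_Jpow hk]
  intro u hu
  have a01 := mem_mId.mp h01 u hu
  have a02 := mem_mId.mp h02 u hu
  have a12 := mem_mId.mp h12 u hu
  have aAll := mem_mId.mp hAll u hu
  rw [wt01] at a01; rw [wt02] at a02; rw [wt12] at a12; rw [wtAll] at aAll
  exact ⟨min (u 0) k + min (u 1) k - k, k - min (u 1) k, k - min (u 0) k,
    by omega, by omega, by omega, by omega⟩

lemma X_eq (i : Fin 3) : (X i : S K) = monomial (Finsupp.single i 1) 1 := by
  rw [← MvPolynomial.X_pow_eq_monomial, pow_one]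

lemma span_pair_eq (i j : Fin 3) (c : Fin 3 → ℕ) (hci : c i = 1) (hcj : c j = 1)
    (hc : ∀ s, s ≠ i → s ≠ j → c s = 0) :
    (Ideal.span {X i, X j} : Ideal (S K)) = mId K c 1 := by
  have himg : ({X i, X j} : Set (S K))
      = (fun d => monomial d (1 : K)) '' {Finsupp.single i 1, Finsupp.single j 1} := by
    rw [Set.image_insert_eq, Set.image_singleton, X_eq, X_eq]
  ext f
  rw [himg, mem_ideal_span_monomial_image, mem_mId]
  refine forall₂_congr fun u hu => ?_
  constructor
  · rintro ⟨si, hsi, hle⟩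
    rcases hsi with rfl | rfl
    · have := wt_mono (c := c) hle
      rw [wt_single, hci, one_mul] at this
      omega
    · have := wt_mono (c := c) hle
      rw [wt_single, hcj, one_mul] at this
      omega
  · intro h1
    by_cases hui : 1 ≤ u i
    · exact ⟨Finsupp.single i 1, Or.inl rfl, Finsupp.single_le_iff.mpr hui⟩
    by_cases huj : 1 ≤ u j
    · exact ⟨Finsupp.single j 1, Or.inr rfl, Finsupp.single_le_iff.mpr huj⟩
    exfalso
    have : wt c u = c 0 * u 0 + c 1 * u 1 + c 2 * u 2 := rfl
    -- every variable other than i, j has weight zero; u i, u j are zero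
    have hwt : wt c u = 0 := by
      rw [this]
      have key : ∀ s : Fin 3, c s * u s = 0 := by
        intro s
        by_cases hsi : s = i
        · subst hsi
          have h0 : u s = 0 := by omega
          rw [h0, mul_zero]
        by_cases hsj : s = j
        · subst hsj
          have h0 : u s = 0 := by omega
          rw [h0, mul_zero]
        · rw [hc s hsi hsj, zero_mul]
      have := key 0; have := key 1; have := key 2
      omega
    omega

lemma span_pair01 : (Ideal.span {X 0, X 1} : Ideal (S K)) = mId K ![1,1,0] 1 := by
  apply span_pair_eq <;> first | rfl | (intro s h1 h2; fin_cases s <;> simp_all)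

lemma span_pair02 : (Ideal.span {X 0, X 2} : Ideal (S K)) = mId K ![1,0,1] 1 := by
  apply span_pair_eq <;> first | rfl | (intro s h1 h2; fin_cases s <;> simp_all)

lemma span_pair12 : (Ideal.span {X 1, X 2} : Ideal (S K)) = mId K ![0,1,1] 1 := by
  apply span_pair_eq <;> first | rfl | (intro s h1 h2; fin_cases s <;> simp_all)

lemma span_triple : (Ideal.span {X 0, X 1, X 2} : Ideal (S K)) = mId K ![1,1,1] 1 := by
  have himg : ({X 0, X 1, X 2} : Set (S K))
      = (fun d => monomial d (1 : K)) ''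
        {Finsupp.single 0 1, Finsupp.single 1 1, Finsupp.single 2 1} := by
    rw [Set.image_insert_eq, Set.image_insert_eq, Set.image_singleton, X_eq, X_eq, X_eq]
  ext f
  rw [himg, mem_ideal_span_monomial_image, mem_mId]
  refine forall₂_congr fun u hu => ?_
  constructor
  · rintro ⟨si, hsi, hle⟩
    rw [wtAll]
    rcases hsi with rfl | rfl | rfl <;>
      · have h := Finsupp.single_le_iff.mp hle; omega
  · intro h1
    rw [wtAll] at h1
    by_cases h0 : 1 ≤ u 0
    · exact ⟨Finsupp.single 0 1, by simp, Finsupp.single_le_iff.mpr h0⟩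
    by_cases hone : 1 ≤ u 1
    · exact ⟨Finsupp.single 1 1, by simp, Finsupp.single_le_iff.mpr hone⟩
    exact ⟨Finsupp.single 2 1, by simp, Finsupp.single_le_iff.mpr (by omega)⟩

lemma mem_ann_iff {I : Ideal (S K)} {f g : S K} :
    g ∈ (⊥ : Submodule (S K) (S K ⧸ I)).colon {Ideal.Quotient.mk I f} ↔ g * f ∈ I := by
  rw [Submodule.mem_colon_singleton, Submodule.mem_bot, ← Ideal.Quotient.mk_eq_mk,
    ← Submodule.Quotient.mk_smul, smul_eq_mul, Ideal.Quotient.mk_eq_mk,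
    Ideal.Quotient.eq_zero_iff_mem]

lemma monomial_mem_Jpow_iff {k : ℕ} (hk : 1 ≤ k) (A B C : ℕ) :
    (monomial (tri A B C) 1 : S K) ∈ (JJ K) ^ k ↔
      ∃ a b c : ℕ, a + b + c = k ∧ a + b ≤ A ∧ a + c ≤ B ∧ b + c ≤ C := by
  rw [mem_Jpow hk]
  classical
  have hsupp : (monomial (tri A B C) (1 : K)).support = {tri A B C} := by
    rw [MvPolynomial.support_monomial]
    simp
  rw [hsupp]
  simp only [Finset.mem_singleton]
  constructor
  · intro h
    obtain ⟨a, b, c, h1, h2, h3, h4⟩ := h (tri A B C) rfl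
    exact ⟨a, b, c, h1, by simpa using h2, by simpa using h3, by simpa using h4⟩
  · rintro ⟨a, b, c, h1, h2, h3, h4⟩ u rfl
    exact ⟨a, b, c, h1, by simpa, by simpa, by simpa⟩

lemma X_mul_tri (i : Fin 3) (A B C : ℕ) :
    (X i : S K) * monomial (tri A B C) 1
      = monomial (Finsupp.single i 1 + tri A B C) 1 := by
  rw [X_eq, MvPolynomial.monomial_mul, one_mul]

lemma X0_mul_tri (A B C : ℕ) :
    (X 0 : S K) * monomial (tri A B C) 1 = monomial (tri (A + 1) B C) 1 := by
  have h : Finsupp.single 0 1 + tri A B C = tri (A + 1) B C := by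
    ext s; fin_cases s <;> simp [tri, Finsupp.single_apply, Nat.add_comm]
  rw [X_mul_tri, h]

lemma X1_mul_tri (A B C : ℕ) :
    (X 1 : S K) * monomial (tri A B C) 1 = monomial (tri A (B + 1) C) 1 := by
  have h : Finsupp.single 1 1 + tri A B C = tri A (B + 1) C := by
    ext s; fin_cases s <;> simp [tri, Finsupp.single_apply, Nat.add_comm]
  rw [X_mul_tri, h]

lemma X2_mul_tri (A B C : ℕ) :
    (X 2 : S K) * monomial (tri A B C) 1 = monomial (tri A B (C + 1)) 1 := by
  have h : Finsupp.single 2 1 + tri A B C = tri A B (C + 1) := by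
    ext s; fin_cases s <;> simp [tri, Finsupp.single_apply, Nat.add_comm]
  rw [X_mul_tri, h]

lemma monomial_tri_not_mem_mId {c : Fin 3 → ℕ} {t : ℕ} {A B C : ℕ}
    (h : wt c (tri A B C) < t) : (monomial (tri A B C) 1 : S K) ∉ mId K c t := by
  classical
  rw [not_mem_mId_iff]
  refine ⟨tri A B C, ?_, h⟩
  rw [MvPolynomial.support_monomial]
  simp

lemma coeff_zero_aeval (t : Fin 3) (H : Polynomial K) :
    MvPolynomial.coeff 0 (Polynomial.aeval (X t : S K) H) = H.coeff 0 := by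
  have h1 : (MvPolynomial.constantCoeff (σ := Fin 3) (R := K))
        (Polynomial.eval₂ (algebraMap K (S K)) (X t) H)
      = Polynomial.eval₂ ((MvPolynomial.constantCoeff).comp (algebraMap K (S K)))
        (MvPolynomial.constantCoeff (X t)) H := Polynomial.hom_eval₂ _ _ _ _
  rw [MvPolynomial.constantCoeff_X, Polynomial.eval₂_at_zero] at h1
  rw [Polynomial.aeval_def, ← MvPolynomial.constantCoeff_eq]
  rw [h1, RingHom.comp_apply, MvPolynomial.algebraMap_eq, MvPolynomial.constantCoeff_C]

lemma coeff_zero_of_mem_mIdAll {h : S K} (hh : h ∈ mId K ![1,1,1] 1) :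
    MvPolynomial.coeff 0 h = 0 := by
  by_contra hc
  have h0 : (0 : Fin 3 →₀ ℕ) ∈ h.support := MvPolynomial.mem_support_iff.mpr hc
  have := mem_mId.mp hh 0 h0
  simp [wt] at this

lemma psi_phi {i j t : Fin 3} (hit : i ≠ t) (hjt : j ≠ t)
    (hcov : ∀ s : Fin 3, s = i ∨ s = j ∨ s = t) (g : S K) :
    g - Polynomial.aeval (X t : S K)
        (aeval (fun s : Fin 3 => if s = t then (Polynomial.X : Polynomial K) else 0) g)
      ∈ Ideal.span {X i, X j} := by
  induction g using MvPolynomial.induction_on' with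
  | monomial d r =>
    by_cases hd : d i = 0 ∧ d j = 0
    · have hdeq : d = Finsupp.single t (d t) := by
        ext s
        rcases hcov s with rfl | rfl | rfl
        · rw [Finsupp.single_apply, if_neg (fun h => hit h.symm), hd.1]
        · rw [Finsupp.single_apply, if_neg (fun h => hjt h.symm), hd.2]
        · rw [Finsupp.single_apply, if_pos rfl]
      rw [hdeq]
      have hpsi : aeval (fun s : Fin 3 => if s = t then (Polynomial.X : Polynomial K) else 0)
          (monomial (Finsupp.single t (d t)) r)
          = Polynomial.C r * Polynomial.X ^ (d t) := by
        rw [MvPolynomial.aeval_monomial, Polynomial.algebraMap_eq]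
        congr 1
        rw [Finsupp.prod_single_index (by rw [pow_zero])]
        rw [if_pos rfl]
      rw [hpsi, map_mul, Polynomial.aeval_C, map_pow, Polynomial.aeval_X,
        MvPolynomial.X_pow_eq_monomial, MvPolynomial.algebraMap_eq,
        MvPolynomial.C_mul_monomial, mul_one, sub_self]
      exact Ideal.zero_mem _
    · have hpsi : aeval (fun s : Fin 3 => if s = t then (Polynomial.X : Polynomial K) else 0)
          (monomial d r) = 0 := by
        rw [MvPolynomial.aeval_monomial]
        have : ∃ s0 : Fin 3, (s0 = i ∨ s0 = j) ∧ d s0 ≠ 0 := by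
          by_cases h1 : d i = 0
          · exact ⟨j, Or.inr rfl, fun h => hd ⟨h1, h⟩⟩
          · exact ⟨i, Or.inl rfl, h1⟩
        obtain ⟨s0, hs0, hds0⟩ := this
        have hmem : s0 ∈ d.support := Finsupp.mem_support_iff.mpr hds0
        have hzero : (fun s e => (if s = t then (Polynomial.X : Polynomial K) else 0) ^ e) s0 (d s0) = 0 := by
          have hst : s0 ≠ t := by rcases hs0 with rfl | rfl; exacts [hit, hjt]
          simp only [if_neg hst]
          exact zero_pow hds0
        rw [Finsupp.prod, Finset.prod_eq_zero hmem hzero, mul_zero]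
      rw [hpsi, map_zero, sub_zero]
      -- the monomial is divisible by X i or X j
      have : ∃ s0 : Fin 3, (s0 = i ∨ s0 = j) ∧ d s0 ≠ 0 := by
        by_cases h1 : d i = 0
        · exact ⟨j, Or.inr rfl, fun h => hd ⟨h1, h⟩⟩
        · exact ⟨i, Or.inl rfl, h1⟩
      obtain ⟨s0, hs0, hds0⟩ := this
      have hfac : monomial d r = (X s0 : S K) * monomial (d - Finsupp.single s0 1) r := by
        rw [X_eq, MvPolynomial.monomial_mul, one_mul]
        have heq : Finsupp.single s0 1 + (d - Finsupp.single s0 1) = d := by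
          ext s
          rw [Finsupp.add_apply, Finsupp.tsub_apply, Finsupp.single_apply]
          by_cases hss : s0 = s
          · subst hss; rw [if_pos rfl]; omega
          · rw [if_neg hss]; omega
        rw [heq]
      rw [hfac]
      refine Ideal.mul_mem_right _ _ (Ideal.subset_span ?_)
      rcases hs0 with rfl | rfl
      · exact Set.mem_insert _ _
      · exact Set.mem_insert_iff.mpr (Or.inr rfl)
  | add p q hp hq =>
    have h := add_mem hp hq
    convert h using 1
    rw [map_add, map_add]
    ring

lemma between {p : Ideal (S K)} (hp : p.IsPrime) {i j t : Fin 3}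
    (hit : i ≠ t) (hjt : j ≠ t)
    (hcov : ∀ s : Fin 3, s = i ∨ s = j ∨ s = t)
    (hpm : p ≤ mId K ![1,1,1] 1) (hXi : X i ∈ p) (hXj : X j ∈ p) (hXt : X t ∉ p) :
    p ≤ Ideal.span {X i, X j} := by
  have hspanle : Ideal.span {X i, X j} ≤ p := by
    rw [Ideal.span_le]
    rintro x hx
    simp only [Set.mem_insert_iff, Set.mem_singleton_iff] at hx
    rcases hx with rfl | rfl
    exacts [hXi, hXj]
  have key : ∀ n : ℕ, ∀ H : Polynomial K, H.natDegree ≤ n → H ≠ 0 → H.coeff 0 = 0 →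
      Polynomial.aeval (X t : S K) H ∈ p → X t ∈ p := by
    intro n
    induction n with
    | zero =>
      intro H h0 hne hc _
      exact absurd (by rw [Polynomial.eq_C_of_natDegree_le_zero h0, hc, map_zero]) hne
    | succ n ih =>
      intro H hdeg hne hc hmem
      obtain ⟨Q, rfl⟩ := Polynomial.X_dvd_iff.mpr hc
      have hQne : Q ≠ 0 := fun h => hne (by rw [h, mul_zero])
      have heq : Polynomial.aeval (X t : S K) (Polynomial.X * Q)
          = X t * Polynomial.aeval (X t : S K) Q := by
        rw [map_mul, Polynomial.aeval_X]
      rw [heq] at hmem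
      rcases hp.mem_or_mem hmem with h | h
      · exact h
      · by_cases hq0 : Q.coeff 0 = 0
        · have hdq : Q.natDegree ≤ n := by
            have := Polynomial.natDegree_X_mul hQne
            omega
          exact ih Q hdq hQne hq0 h
        · exfalso
          have h2 := coeff_zero_of_mem_mIdAll (hpm h)
          rw [coeff_zero_aeval] at h2
          exact hq0 h2
  intro g hg
  by_contra hgs
  set H := aeval (fun s : Fin 3 => if s = t then (Polynomial.X : Polynomial K) else 0) g with hH
  have hspan := psi_phi hit hjt hcov g (K := K)
  rw [← hH] at hspan
  have hφH : Polynomial.aeval (X t : S K) H ∈ p := by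
    have heq : Polynomial.aeval (X t : S K) H
        = g - (g - Polynomial.aeval (X t : S K) H) := by ring
    rw [heq]
    exact sub_mem hg (hspanle hspan)
  have hHne : H ≠ 0 := by
    intro h0
    rw [h0, map_zero, sub_zero] at hspan
    exact hgs hspan
  have hc0 : H.coeff 0 = 0 := by
    have := coeff_zero_of_mem_mIdAll (hpm hφH)
    rwa [coeff_zero_aeval] at this
  exact hXt (key H.natDegree H le_rfl hHne hc0 hφH)

lemma X_mem_mId_iff (s : Fin 3) (c : Fin 3 → ℕ) (t : ℕ) :
    (X s : S K) ∈ mId K c t ↔ t ≤ c s := by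
  rw [mem_mId]
  rw [MvPolynomial.support_X]
  simp only [Finset.mem_singleton]
  constructor
  · intro h
    have := h _ rfl
    rwa [wt_single, mul_one] at this
  · rintro h u rfl
    rwa [wt_single, mul_one]

lemma assoc_pair01 {k : ℕ} (hk : 1 ≤ k) :
    IsAssociatedPrime (Ideal.span {X 0, X 1} : Ideal (S K)) (S K ⧸ (JJ K) ^ k) := by
  refine isAssociatedPrime_iff.mpr ⟨by rw [span_pair01]; exact mId_isPrime _,
    Ideal.Quotient.mk _ (monomial (tri (k-1) 0 k) 1), ?_⟩
  have hnot : (monomial (tri (k-1) 0 k) 1 : S K) ∉ mId K ![1,1,0] k :=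
    monomial_tri_not_mem_mId (by rw [wt01]; simp only [tri_apply0, tri_apply1]; omega)
  apply le_antisymm
  · rw [Ideal.span_le]
    rintro x hx
    simp only [Set.mem_insert_iff, Set.mem_singleton_iff] at hx
    rcases hx with rfl | rfl
    · apply mem_ann_iff.mpr
      rw [X0_mul_tri]
      exact (monomial_mem_Jpow_iff hk _ _ _).mpr
        ⟨0, k, 0, by omega, by omega, by omega, by omega⟩
    · apply mem_ann_iff.mpr
      rw [X1_mul_tri]
      exact (monomial_mem_Jpow_iff hk _ _ _).mpr
        ⟨0, k-1, 1, by omega, by omega, by omega, by omega⟩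
  · intro g hg
    rw [span_pair01]
    exact colon_lemma hnot (Jpow_le_mId01 hk (mem_ann_iff.mp hg))

lemma assoc_pair02 {k : ℕ} (hk : 1 ≤ k) :
    IsAssociatedPrime (Ideal.span {X 0, X 2} : Ideal (S K)) (S K ⧸ (JJ K) ^ k) := by
  refine isAssociatedPrime_iff.mpr ⟨by rw [span_pair02]; exact mId_isPrime _,
    Ideal.Quotient.mk _ (monomial (tri (k-1) k 0) 1), ?_⟩
  have hnot : (monomial (tri (k-1) k 0) 1 : S K) ∉ mId K ![1,0,1] k :=
    monomial_tri_not_mem_mId (by rw [wt02]; simp only [tri_apply0, tri_apply2]; omega)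
  apply le_antisymm
  · rw [Ideal.span_le]
    rintro x hx
    simp only [Set.mem_insert_iff, Set.mem_singleton_iff] at hx
    rcases hx with rfl | rfl
    · apply mem_ann_iff.mpr
      rw [X0_mul_tri]
      exact (monomial_mem_Jpow_iff hk _ _ _).mpr
        ⟨k, 0, 0, by omega, by omega, by omega, by omega⟩
    · apply mem_ann_iff.mpr
      rw [X2_mul_tri]
      exact (monomial_mem_Jpow_iff hk _ _ _).mpr
        ⟨k-1, 0, 1, by omega, by omega, by omega, by omega⟩
  · intro g hg
    rw [span_pair02]
    exact colon_lemma hnot (Jpow_le_mId02 hk (mem_ann_iff.mp hg))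

lemma assoc_pair12 {k : ℕ} (hk : 1 ≤ k) :
    IsAssociatedPrime (Ideal.span {X 1, X 2} : Ideal (S K)) (S K ⧸ (JJ K) ^ k) := by
  refine isAssociatedPrime_iff.mpr ⟨by rw [span_pair12]; exact mId_isPrime _,
    Ideal.Quotient.mk _ (monomial (tri k (k-1) 0) 1), ?_⟩
  have hnot : (monomial (tri k (k-1) 0) 1 : S K) ∉ mId K ![0,1,1] k :=
    monomial_tri_not_mem_mId (by rw [wt12]; simp only [tri_apply1, tri_apply2]; omega)
  apply le_antisymm
  · rw [Ideal.span_le]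
    rintro x hx
    simp only [Set.mem_insert_iff, Set.mem_singleton_iff] at hx
    rcases hx with rfl | rfl
    · apply mem_ann_iff.mpr
      rw [X1_mul_tri]
      exact (monomial_mem_Jpow_iff hk _ _ _).mpr
        ⟨k, 0, 0, by omega, by omega, by omega, by omega⟩
    · apply mem_ann_iff.mpr
      rw [X2_mul_tri]
      exact (monomial_mem_Jpow_iff hk _ _ _).mpr
        ⟨k-1, 1, 0, by omega, by omega, by omega, by omega⟩
  · intro g hg
    rw [span_pair12]
    exact colon_lemma hnot (Jpow_le_mId12 hk (mem_ann_iff.mp hg))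

lemma assoc_triple {k : ℕ} (hk : 2 ≤ k) :
    IsAssociatedPrime (Ideal.span {X 0, X 1, X 2} : Ideal (S K)) (S K ⧸ (JJ K) ^ k) := by
  have hk1 : 1 ≤ k := by omega
  refine isAssociatedPrime_iff.mpr ⟨by rw [span_triple]; exact mId_isPrime _,
    Ideal.Quotient.mk _ (monomial (tri (k-1) (k-1) 1) 1), ?_⟩
  have hnot : (monomial (tri (k-1) (k-1) 1) 1 : S K) ∉ mId K ![1,1,1] (2 * k) :=
    monomial_tri_not_mem_mId
      (by rw [wtAll]; simp only [tri_apply0, tri_apply1, tri_apply2]; omega)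
  apply le_antisymm
  · rw [Ideal.span_le]
    rintro x hx
    simp only [Set.mem_insert_iff, Set.mem_singleton_iff] at hx
    rcases hx with rfl | rfl | rfl
    · apply mem_ann_iff.mpr
      rw [X0_mul_tri]
      exact (monomial_mem_Jpow_iff hk1 _ _ _).mpr
        ⟨k-1, 1, 0, by omega, by omega, by omega, by omega⟩
    · apply mem_ann_iff.mpr
      rw [X1_mul_tri]
      exact (monomial_mem_Jpow_iff hk1 _ _ _).mpr
        ⟨k-1, 0, 1, by omega, by omega, by omega, by omega⟩
    · apply mem_ann_iff.mpr
      rw [X2_mul_tri]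
      exact (monomial_mem_Jpow_iff hk1 _ _ _).mpr
        ⟨k-2, 1, 1, by omega, by omega, by omega, by omega⟩
  · intro g hg
    rw [span_triple]
    exact colon_lemma hnot (Jpow_le_mIdAll hk1 (mem_ann_iff.mp hg))

lemma ass_char {k : ℕ} (hk : 1 ≤ k) {p : Ideal (S K)}
    (hp : p ∈ associatedPrimes (S K) (S K ⧸ (JJ K) ^ k)) :
    p = Ideal.span {X 0, X 1} ∨ p = Ideal.span {X 0, X 2} ∨ p = Ideal.span {X 1, X 2} ∨
      (2 ≤ k ∧ p = Ideal.span {X 0, X 1, X 2}) := by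
  obtain ⟨hprime, x, hx⟩ := isAssociatedPrime_iff.mp hp
  obtain ⟨f, rfl⟩ := Ideal.Quotient.mk_surjective x
  have hmem : ∀ g : S K, g ∈ p ↔ g * f ∈ (JJ K) ^ k := by
    intro g; rw [hx]; exact mem_ann_iff
  have hf : f ∉ (JJ K) ^ k := by
    intro h
    exact hprime.ne_top ((Ideal.eq_top_iff_one p).mpr ((hmem 1).mpr (by rwa [one_mul])))
  have hXX : ∀ g ∈ ({X 0 * X 1, X 0 * X 2, X 1 * X 2} : Set (S K)), g ∈ p := by
    intro g hgJ
    have h1 : g ^ k ∈ (JJ K) ^ k := Ideal.pow_mem_pow (Ideal.subset_span hgJ) k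
    have h2 : g ^ k ∈ p := (hmem _).mpr (Ideal.mul_mem_right f _ h1)
    exact hprime.mem_of_pow_mem k h2
  have h2vars : (X 0 ∈ p ∧ X 1 ∈ p) ∨ (X 0 ∈ p ∧ X 2 ∈ p) ∨ (X 1 ∈ p ∧ X 2 ∈ p) := by
    have a01 := hprime.mem_or_mem (hXX _ (Set.mem_insert _ _))
    have a02 := hprime.mem_or_mem (hXX _ (Set.mem_insert_iff.mpr (Or.inr (Set.mem_insert _ _))))
    have a12 := hprime.mem_or_mem (hXX _ (Set.mem_insert_iff.mpr (Or.inr (Set.mem_insert_iff.mpr (Or.inr rfl)))))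
    tauto
  -- helper to settle the pair cases
  have settle : ∀ (c : Fin 3 → ℕ) (i j : Fin 3), c i = 1 → c j = 1 →
      (∀ s, s ≠ i → s ≠ j → c s = 0) → X i ∈ p → X j ∈ p →
      p ≤ mId K c 1 → p = Ideal.span {X i, X j} := by
    intro c i j hci hcj hc hXi hXj hle
    apply le_antisymm
    · rw [span_pair_eq i j c hci hcj hc]; exact hle
    · rw [Ideal.span_le]
      rintro x hx
      simp only [Set.mem_insert_iff, Set.mem_singleton_iff] at hx
      rcases hx with rfl | rfl
      exacts [hXi, hXj]
  by_cases h01 : f ∈ mId K ![1,1,0] k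
  case neg =>
    -- p ≤ (X0, X1)
    have hle : p ≤ mId K ![1,1,0] 1 := fun g hg =>
      colon_lemma h01 (Jpow_le_mId01 hk ((hmem g).mp hg))
    left
    rcases h2vars with ⟨hX0, hX1⟩ | ⟨hX0, hX2⟩ | ⟨hX1, hX2⟩
    · exact settle ![1,1,0] 0 1 (by decide) (by decide)
        (by decide) hX0 hX1 hle
    · exact absurd ((X_mem_mId_iff 2 ![1,1,0] 1).mp (hle hX2)) (by decide)
    · exact absurd ((X_mem_mId_iff 2 ![1,1,0] 1).mp (hle hX2)) (by decide)
  case pos =>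
  by_cases h02 : f ∈ mId K ![1,0,1] k
  case neg =>
    have hle : p ≤ mId K ![1,0,1] 1 := fun g hg =>
      colon_lemma h02 (Jpow_le_mId02 hk ((hmem g).mp hg))
    right; left
    rcases h2vars with ⟨hX0, hX1⟩ | ⟨hX0, hX2⟩ | ⟨hX1, hX2⟩
    · exact absurd ((X_mem_mId_iff 1 ![1,0,1] 1).mp (hle hX1)) (by decide)
    · exact settle ![1,0,1] 0 2 (by decide) (by decide)
        (by decide) hX0 hX2 hle
    · exact absurd ((X_mem_mId_iff 1 ![1,0,1] 1).mp (hle hX1)) (by decide)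
  case pos =>
  by_cases h12 : f ∈ mId K ![0,1,1] k
  case neg =>
    have hle : p ≤ mId K ![0,1,1] 1 := fun g hg =>
      colon_lemma h12 (Jpow_le_mId12 hk ((hmem g).mp hg))
    right; right; left
    rcases h2vars with ⟨hX0, hX1⟩ | ⟨hX0, hX2⟩ | ⟨hX1, hX2⟩
    · exact absurd ((X_mem_mId_iff 0 ![0,1,1] 1).mp (hle hX0)) (by decide)
    · exact absurd ((X_mem_mId_iff 0 ![0,1,1] 1).mp (hle hX0)) (by decide)
    · exact settle ![0,1,1] 1 2 (by decide) (by decide)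
        (by decide) hX1 hX2 hle
  case pos =>
  -- f lies in all three edge ideals; k must be at least 2
  have hk2 : 2 ≤ k := by
    by_contra hlt
    have hk1 : k = 1 := by omega
    subst hk1
    apply hf
    refine mem_Jpow_of_mem_mIds le_rfl h01 h02 h12 ?_
    rw [mem_mId]
    intro u hu
    have a01 := mem_mId.mp h01 u hu
    have a02 := mem_mId.mp h02 u hu
    have a12 := mem_mId.mp h12 u hu
    rw [wt01] at a01; rw [wt02] at a02; rw [wt12] at a12
    rw [wtAll]; omega
  have hAll : f ∉ mId K ![1,1,1] (2 * k) := by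
    intro h
    exact hf (mem_Jpow_of_mem_mIds hk h01 h02 h12 h)
  have hpm : p ≤ mId K ![1,1,1] 1 := fun g hg =>
    colon_lemma hAll (Jpow_le_mIdAll hk ((hmem g).mp hg))
  -- now p is between an edge prime and the maximal ideal
  have htriple : ∀ (hX0 : X 0 ∈ p) (hX1 : X 1 ∈ p) (hX2 : X 2 ∈ p),
      p = Ideal.span {X 0, X 1, X 2} := by
    intro hX0 hX1 hX2
    apply le_antisymm
    · rw [span_triple]; exact hpm
    · rw [Ideal.span_le]
      rintro x hx
      simp only [Set.mem_insert_iff, Set.mem_singleton_iff] at hx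
      rcases hx with rfl | rfl | rfl
      exacts [hX0, hX1, hX2]
  rcases h2vars with ⟨hXa, hXb⟩ | ⟨hXa, hXb⟩ | ⟨hXa, hXb⟩
  · by_cases hX2 : (X 2 : S K) ∈ p
    · exact Or.inr (Or.inr (Or.inr ⟨hk2, htriple hXa hXb hX2⟩))
    · left
      have hbtw := between hprime (i := 0) (j := 1) (t := 2) (by decide) (by decide)
        (by decide) hpm hXa hXb hX2
      apply le_antisymm hbtw
      rw [Ideal.span_le]
      rintro x hx
      simp only [Set.mem_insert_iff, Set.mem_singleton_iff] at hx
      rcases hx with rfl | rfl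
      exacts [hXa, hXb]
  · by_cases hX1 : (X 1 : S K) ∈ p
    · exact Or.inr (Or.inr (Or.inr ⟨hk2, htriple hXa hX1 hXb⟩))
    · right; left
      have hbtw := between hprime (i := 0) (j := 2) (t := 1) (by decide) (by decide)
        (by decide) hpm hXa hXb hX1
      apply le_antisymm hbtw
      rw [Ideal.span_le]
      rintro x hx
      simp only [Set.mem_insert_iff, Set.mem_singleton_iff] at hx
      rcases hx with rfl | rfl
      exacts [hXa, hXb]
  · by_cases hX0 : (X 0 : S K) ∈ p
    · exact Or.inr (Or.inr (Or.inr ⟨hk2, htriple hX0 hXa hXb⟩))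
    · right; right; left
      have hbtw := between hprime (i := 1) (j := 2) (t := 0) (by decide) (by decide)
        (by decide) hpm hXa hXb hX0
      apply le_antisymm hbtw
      rw [Ideal.span_le]
      rintro x hx
      simp only [Set.mem_insert_iff, Set.mem_singleton_iff] at hx
      rcases hx with rfl | rfl
      exacts [hXa, hXb]

lemma ass_eq_fourset {k : ℕ} (hk : 2 ≤ k) :
    associatedPrimes (S K) (S K ⧸ (JJ K) ^ k)
      = {Ideal.span {X 0, X 1}, Ideal.span {X 0, X 2}, Ideal.span {X 1, X 2},
          Ideal.span {X 0, X 1, X 2}} := by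
  have hk1 : 1 ≤ k := by omega
  ext p
  constructor
  · intro hp
    rcases ass_char hk1 hp with h | h | h | ⟨-, h⟩ <;> simp [h]
  · intro hp
    simp only [Set.mem_insert_iff, Set.mem_singleton_iff] at hp
    rcases hp with rfl | rfl | rfl | rfl
    · exact assoc_pair01 hk1
    · exact assoc_pair02 hk1
    · exact assoc_pair12 hk1
    · exact assoc_triple hk

lemma triple_not_assoc_one :
    (Ideal.span {X 0, X 1, X 2} : Ideal (S K))
      ∉ associatedPrimes (S K) (S K ⧸ (JJ K) ^ 1) := by
  intro hp
  have hX2 : (X 2 : S K) ∈ Ideal.span {X 0, X 1, X 2} :=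
    Ideal.subset_span (by simp)
  have hX1 : (X 1 : S K) ∈ Ideal.span {X 0, X 1, X 2} :=
    Ideal.subset_span (by simp)
  have hX0 : (X 0 : S K) ∈ Ideal.span {X 0, X 1, X 2} :=
    Ideal.subset_span (by simp)
  rcases ass_char le_rfl hp with h | h | h | ⟨h2, -⟩
  · rw [h, span_pair01] at hX2
    have := (X_mem_mId_iff 2 ![1,1,0] 1).mp hX2
    exact absurd this (by decide)
  · rw [h, span_pair02] at hX1
    have := (X_mem_mId_iff 1 ![1,0,1] 1).mp hX1
    exact absurd this (by decide)
  · rw [h, span_pair12] at hX0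
    have := (X_mem_mId_iff 0 ![0,1,1] 1).mp hX0
    exact absurd this (by decide)
  · omega

end EdgeTri

/-- For `J = (xy, xz, yz) ⊆ K[x,y,z]`, one has
`Ass(J^k) = {(x,y), (x,z), (y,z), (x,y,z)}` for every `k ≥ 2`; in particular
`astab(J) = 2`. -/
theorem ass_pow_edgeIdeal (K : Type*) [Field K]
    (J : Ideal (MvPolynomial (Fin 3) K))
    (hJ : J = Ideal.span {X 0 * X 1, X 0 * X 2, X 1 * X 2}) :
    (∀ k : ℕ, 2 ≤ k →
      associatedPrimes (MvPolynomial (Fin 3) K) (MvPolynomial (Fin 3) K ⧸ J ^ k)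
        = {Ideal.span {X 0, X 1}, Ideal.span {X 0, X 2}, Ideal.span {X 1, X 2},
           Ideal.span {X 0, X 1, X 2}}) ∧
    astab J = 2 := by
  subst hJ
  have hmain : ∀ k : ℕ, 2 ≤ k →
      associatedPrimes (MvPolynomial (Fin 3) K)
          (MvPolynomial (Fin 3) K ⧸ (EdgeTri.JJ K) ^ k)
        = {Ideal.span {X 0, X 1}, Ideal.span {X 0, X 2}, Ideal.span {X 1, X 2},
           Ideal.span {X 0, X 1, X 2}} := fun k hk => EdgeTri.ass_eq_fourset hk
  refine ⟨hmain, ?_⟩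
  unfold astab
  apply le_antisymm
  · apply Nat.sInf_le
    exact ⟨by norm_num, fun k hk => by rw [hmain k hk, hmain 2 le_rfl]⟩
  · apply le_csInf
    · exact ⟨2, by norm_num, fun k hk => by rw [hmain k hk, hmain 2 le_rfl]⟩
    · rintro m ⟨h1, hstab⟩
      by_contra hlt
      have hm : m = 1 := by omega
      subst hm
      have h2 := hstab 2 (by omega)
      have htr : (Ideal.span {X 0, X 1, X 2} : Ideal (EdgeTri.S K))
          ∈ associatedPrimes (EdgeTri.S K) (EdgeTri.S K ⧸ (EdgeTri.JJ K) ^ 2) :=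
        EdgeTri.assoc_triple le_rfl
      rw [h2] at htr
      exact EdgeTri.triple_not_assoc_one htr
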